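/- For integers d ≥ 0, n₀ ≥ 1 and k ≥ 1, every finite graph G in which every subgraph with at least n₀ vertices has average degree less than (2d+2)/(d+2) · k is k-choosable with defect max{⌈(n₀-1)/k⌉ - 1, d}. -/

import Mathlib

/-- The monochromatic subgraph of `G` under colouring `φ`. -/
def SimpleGraph.monoSub {V : Type*} (G : SimpleGraph V) (φ : V → ℕ) : SimpleGraph V where
  Adj u v := G.Adj u v ∧ φ u = φ v
  symm := ⟨fun u v h => ⟨G.adj_symm h.1, h.2.symm⟩⟩
  loopless := ⟨fun v h => G.irrefl h.1⟩

/-- The colouring `φ` has defect at most `d`: every vertex has at most `d`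
neighbours of its own colour. -/
def SimpleGraph.DefectLe {V : Type*} (G : SimpleGraph V) (φ : V → ℕ) (d : ℕ) : Prop :=
  ∀ v : V, {w : V | G.Adj v w ∧ φ w = φ v}.ncard ≤ d

/-- The colouring `φ` has clustering at most `c`: every connected component of
the monochromatic subgraph has at most `c` vertices. -/
def SimpleGraph.ClusterLe {V : Type*} (G : SimpleGraph V) (φ : V → ℕ) (c : ℕ) : Prop :=
  ∀ v : V, {w : V | (G.monoSub φ).Reachable v w}.ncard ≤ c

/-- Twice the number of edges of `G` inside the vertex set `s`
(the number of ordered adjacent pairs in `s`). -/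
noncomputable def SimpleGraph.degPairs {V : Type*} (G : SimpleGraph V) (s : Finset V) : ℕ :=
  {p : V × V | p.1 ∈ s ∧ p.2 ∈ s ∧ G.Adj p.1 p.2}.ncard

/-! Induction on the vertex set `s`, with `D` the target defect. If `#s ≤ k (D + 1)`, take a list
colouring minimising the number of monochromatic edges: every vertex has at least as many
neighbours of each colour of its list as of its own colour, so `k` times its monochromatic degree
is less than `#s`. Otherwise sparsity yields an island `A ⊆ s`, a nonempty set in which every
vertex satisfies `deg_A v + (D + 1) deg_{s \ A} v < (D + 1) k`. Colour `s \ A` by induction,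
remove from the list of each `v ∈ A` the colours of its neighbours in `s \ A`, and colour `A`
minimising monochromatic edges inside `A`: `v` keeps at least `k - deg_{s \ A} v` colours, and
the island inequality makes that enough for defect `D`. -/

open Finset

attribute [local instance] Classical.propDecidable

theorem Finset.exists_nonempty_forall_erase_lt {α β : Type*} [LinearOrder β]
    (f : Finset α → β) {s : Finset α} (h : f ∅ < f s) :
    ∃ A ⊆ s, A.Nonempty ∧ ∀ v ∈ A, f (A.erase v) < f A := by
  obtain ⟨A, hA, hmin⟩ := exists_min_image {A ∈ s.powerset | f s ≤ f A} card ⟨s, by simp⟩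
  rw [mem_filter, mem_powerset] at hA
  refine ⟨A, hA.1, nonempty_iff_ne_empty.2 ?_, fun v hv => ?_⟩
  · rintro rfl
    exact (h.trans_le hA.2).false
  · by_contra! hle
    have := hmin (A.erase v) (by simp [(erase_subset v A).trans hA.1, hA.2.trans hle])
    exact (card_erase_lt_of_mem hv).not_ge this

namespace SimpleGraph

variable {V : Type*} (G : SimpleGraph V)

noncomputable def degIn (s : Finset V) (v : V) : ℕ := #{w ∈ s | G.Adj v w}

theorem degIn_eq_sum (s : Finset V) (v : V) :
    G.degIn s v = ∑ w ∈ s, if G.Adj v w then 1 else 0 :=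
  card_filter _ _

theorem degPairs_eq_sum (s : Finset V) : G.degPairs s = ∑ v ∈ s, G.degIn s v := by
  have : {p : V × V | p.1 ∈ s ∧ p.2 ∈ s ∧ G.Adj p.1 p.2} =
      ↑{p ∈ s ×ˢ s | G.Adj p.1 p.2} := by
    ext
    simp [and_assoc]
  rw [degPairs, this, Set.ncard_coe_finset, card_filter, sum_product]
  simp only [degIn_eq_sum]

theorem degIn_erase_self (s : Finset V) (v : V) : G.degIn (s.erase v) v = G.degIn s v := by
  rw [degIn, filter_erase, erase_eq_of_notMem (by simp), degIn]

theorem degIn_add_degIn_sdiff {A s : Finset V} (h : A ⊆ s) (v : V) :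
    G.degIn A v + G.degIn (s \ A) v = G.degIn s v := by
  simp only [degIn_eq_sum]
  rw [add_comm, sum_sdiff h]

theorem degIn_lt_card {s : Finset V} {v : V} (hv : v ∈ s) : G.degIn s v < #s :=
  calc G.degIn s v = G.degIn (s.erase v) v := (G.degIn_erase_self s v).symm
    _ ≤ #(s.erase v) := card_filter_le _ _
    _ < #s := card_erase_lt_of_mem hv

theorem degIn_eq_zero {s : Finset V} {v : V} (h : ∀ w ∈ s, ¬ G.Adj v w) : G.degIn s v = 0 :=
  card_eq_zero.2 (filter_eq_empty_iff.2 h)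

theorem degPairs_eq_erase_add {s : Finset V} {v : V} (hv : v ∈ s) :
    G.degPairs s = G.degPairs (s.erase v) + 2 * G.degIn s v := by
  have hdeg : ∀ w, G.degIn s w = G.degIn (s.erase v) w + if G.Adj w v then 1 else 0 := by
    intro w
    simp only [degIn_eq_sum, sum_erase_add _ _ hv]
  have hsymm : ∑ w ∈ s.erase v, (if G.Adj w v then 1 else 0) = G.degIn s v := by
    simp only [← G.degIn_erase_self s v, degIn_eq_sum, G.adj_comm]
  rw [degPairs_eq_sum, degPairs_eq_sum, ← add_sum_erase _ _ hv,
    sum_congr rfl fun w _ => hdeg w, sum_add_distrib, hsymm]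
  ring

theorem degIn_monoSub_congr {φ ψ : V → ℕ} {s : Finset V} {v : V}
    (h : ∀ w ∈ insert v s, φ w = ψ w) :
    (G.monoSub φ).degIn s v = (G.monoSub ψ).degIn s v := by
  refine congrArg card (filter_congr fun w hw => ?_)
  simp only [monoSub, h v (mem_insert_self v s), h w (mem_insert_of_mem hw)]

theorem card_mul_degIn_monoSub_le {φ : V → ℕ} {T : Finset ℕ} {s : Finset V} {v : V}
    (h : ∀ c ∈ T, (G.monoSub φ).degIn s v ≤ #{w ∈ s | G.Adj v w ∧ φ w = c}) :
    #T * (G.monoSub φ).degIn s v ≤ G.degIn s v :=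
  calc #T * (G.monoSub φ).degIn s v
      ≤ ∑ c ∈ T, #{w ∈ s | G.Adj v w ∧ φ w = c} := by
        simpa using card_nsmul_le_sum T _ _ h
    _ = #{w ∈ {w ∈ s | G.Adj v w} | φ w ∈ T} := by
        rw [← sum_card_fiberwise_eq_card_filter]
        simp only [filter_filter]
    _ ≤ G.degIn s v := card_filter_le _ _

theorem exists_locallyOptimal_listColouring (A : Finset V) (M : V → Finset ℕ)
    (hM : ∀ v, (M v).Nonempty) :
    ∃ φ : V → ℕ, (∀ v, φ v ∈ M v) ∧
      ∀ v ∈ A, ∀ c ∈ M v, (G.monoSub φ).degIn A v ≤ #{w ∈ A | G.Adj v w ∧ φ w = c} := by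
  -- Minimise the number of monochromatic edges in `A`; recolouring `v` to `c` changes it by
  -- twice the change of the monochromatic degree of `v` in `A`.
  set S : Set (V → ℕ) := {φ | ∀ v, φ v ∈ M v}
  have hS : S.Nonempty := ⟨fun v => (hM v).choose, fun v => (hM v).choose_spec⟩
  set mono : (V → ℕ) → ℕ := fun φ => (G.monoSub φ).degPairs A
  set φ := Function.argminOn mono S hS
  have hφ : φ ∈ S := Function.argminOn_mem mono S hS
  refine ⟨φ, hφ, fun v hv c hc => ?_⟩
  set ψ := Function.update φ v c
  have hψ : ψ ∈ S := fun w => by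
    rcases eq_or_ne w v with rfl | hw
    · simpa [ψ] using hc
    · simpa [ψ, hw] using hφ w
  have hmin : mono φ ≤ mono ψ := Function.argminOn_le mono S hψ
  have hrest :
      (G.monoSub ψ).degPairs (A.erase v) = (G.monoSub φ).degPairs (A.erase v) := by
    simp only [degPairs_eq_sum]
    refine sum_congr rfl fun w hw => G.degIn_monoSub_congr fun u hu => ?_
    rw [insert_eq_of_mem hw] at hu
    exact Function.update_of_ne (ne_of_mem_erase hu) c φ
  have hrecolour : (G.monoSub ψ).degIn A v = #{w ∈ A | G.Adj v w ∧ φ w = c} := by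
    refine congrArg card (filter_congr fun w _ => ?_)
    rcases eq_or_ne w v with rfl | hw
    · simp [monoSub]
    · simp [monoSub, ψ, hw, eq_comm]
  simp only [mono, G.monoSub φ |>.degPairs_eq_erase_add hv, G.monoSub ψ |>.degPairs_eq_erase_add hv,
    hrest, hrecolour] at hmin
  omega

def IsIsland (k D : ℕ) (s A : Finset V) : Prop :=
  A ⊆ s ∧ A.Nonempty ∧ ∀ v ∈ A, G.degIn A v + (D + 1) * G.degIn (s \ A) v < (D + 1) * k

theorem exists_isIsland {k D : ℕ} {s : Finset V}
    (h : (D + 2) * G.degPairs s < 2 * (D + 1) * k * #s) : ∃ A, G.IsIsland k D s A := by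
  -- `ρ A - ρ (A.erase v)` is twice the slack of the island inequality at `v`.
  let ρ : Finset V → ℤ := fun A =>
    2 * (D + 1) * k * #A + D * G.degPairs A - 2 * (D + 1) * ∑ v ∈ A, (G.degIn s v : ℤ)
  have hρ : ρ ∅ < ρ s := by
    have h0 : G.degPairs ∅ = 0 := by simp [degPairs_eq_sum]
    simp only [ρ, ← Nat.cast_sum, ← G.degPairs_eq_sum, card_empty, sum_empty, h0]
    push_cast
    linarith [(by exact_mod_cast h : ((D + 2) * G.degPairs s : ℤ) < 2 * (D + 1) * k * #s)]
  obtain ⟨A, hAs, hA, hdrop⟩ := exists_nonempty_forall_erase_lt ρ hρ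
  refine ⟨A, hAs, hA, fun v hv => ?_⟩
  have hlt := hdrop v hv
  simp only [ρ, ← card_erase_add_one hv, G.degPairs_eq_erase_add hv, ← sum_erase_add _ _ hv,
    ← G.degIn_add_degIn_sdiff hAs v] at hlt
  push_cast at hlt
  zify
  linarith

variable {G} {k D : ℕ} {L : V → Finset ℕ}

theorem exists_listColouring_of_card_le (hk : 0 < k) (hL : ∀ v, k ≤ #(L v)) {s : Finset V}
    (hs : #s ≤ k * (D + 1)) :
    ∃ φ : V → ℕ, (∀ v, φ v ∈ L v) ∧ ∀ v ∈ s, (G.monoSub φ).degIn s v ≤ D := by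
  obtain ⟨φ, hφL, hopt⟩ := G.exists_locallyOptimal_listColouring s L
    fun v => card_pos.1 (hk.trans_le (hL v))
  refine ⟨φ, hφL, fun v hv => Nat.lt_succ_iff.1 (Nat.lt_of_mul_lt_mul_left (a := k) ?_)⟩
  calc k * (G.monoSub φ).degIn s v
      ≤ #(L v) * (G.monoSub φ).degIn s v := Nat.mul_le_mul_right _ (hL v)
    _ ≤ G.degIn s v := G.card_mul_degIn_monoSub_le (hopt v hv)
    _ < #s := G.degIn_lt_card hv
    _ ≤ k * (D + 1) := hs

theorem exists_listColouring_of_isIsland (hL : ∀ v, k ≤ #(L v)) {s A : Finset V}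
    (hA : G.IsIsland k D s A) {φ₀ : V → ℕ} (hφ₀L : ∀ v, φ₀ v ∈ L v)
    (hφ₀ : ∀ v ∈ s \ A, (G.monoSub φ₀).degIn (s \ A) v ≤ D) :
    ∃ φ : V → ℕ, (∀ v, φ v ∈ L v) ∧ ∀ v ∈ s, (G.monoSub φ).degIn s v ≤ D := by
  obtain ⟨hAs, -, hisland⟩ := hA
  set t := s \ A
  let blocked : V → Finset ℕ := fun v => {w ∈ t | G.Adj v w}.image φ₀
  let M : V → Finset ℕ := fun v => if v ∈ A then L v \ blocked v else {φ₀ v}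
  have hMcard : ∀ v ∈ A, k ≤ #(M v) + G.degIn t v := fun v hv => by
    simp only [M, if_pos hv]
    have : #(blocked v) ≤ G.degIn t v := card_image_le
    have := card_le_card_sdiff_add_card (s := L v) (t := blocked v)
    have := hL v
    omega
  have hM : ∀ v, (M v).Nonempty := fun v => by
    by_cases hv : v ∈ A
    · have : G.degIn t v < k :=
        Nat.lt_of_mul_lt_mul_left ((Nat.le_add_left _ _).trans_lt (hisland v hv))
      have := hMcard v hv
      exact card_pos.1 (by omega)
    · simp [M, hv]
  obtain ⟨φ, hφM, hopt⟩ := G.exists_locallyOptimal_listColouring A M hM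
  have hout : ∀ v ∉ A, φ v = φ₀ v := fun v hv => by simpa [M, hv] using hφM v
  have hin : ∀ v ∈ A, φ v ∈ L v ∧ φ v ∉ blocked v := fun v hv => by
    simpa [M, hv] using hφM v
  have hsep : ∀ v ∈ A, ∀ w ∈ t, ¬ (G.monoSub φ).Adj v w := by
    rintro v hv w hw ⟨hvw, hφ⟩
    refine (hin v hv).2 (mem_image.2 ⟨w, mem_filter.2 ⟨hw, hvw⟩, ?_⟩)
    rw [← hout w (mem_sdiff.1 hw).2, hφ]
  refine ⟨φ, fun v => ?_, fun v hv => ?_⟩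
  · by_cases hv : v ∈ A
    · exact (hin v hv).1
    · exact hout v hv ▸ hφ₀L v
  rw [← (G.monoSub φ).degIn_add_degIn_sdiff hAs]
  by_cases hvA : v ∈ A
  · rw [(G.monoSub φ).degIn_eq_zero (hsep v hvA), add_zero]
    by_contra! hD
    have : (D + 1) * k ≤ G.degIn A v + (D + 1) * G.degIn t v :=
      calc (D + 1) * k
          ≤ (D + 1) * (#(M v) + G.degIn t v) := Nat.mul_le_mul_left _ (hMcard v hvA)
        _ = #(M v) * (D + 1) + (D + 1) * G.degIn t v := by ring
        _ ≤ #(M v) * (G.monoSub φ).degIn A v + (D + 1) * G.degIn t v := by gcongr; exact hD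
        _ ≤ G.degIn A v + (D + 1) * G.degIn t v := by
          gcongr
          exact G.card_mul_degIn_monoSub_le (hopt v hvA)
    exact (hisland v hvA).not_ge this
  · have hvt : v ∈ t := mem_sdiff.2 ⟨hv, hvA⟩
    rw [(G.monoSub φ).degIn_eq_zero fun w hw hvw => hsep w hw v hvt hvw.symm, zero_add,
      G.degIn_monoSub_congr fun w hw => hout w ?_]
    · exact hφ₀ v hvt
    · rw [insert_eq_of_mem hvt] at hw
      exact (mem_sdiff.1 hw).2

theorem exists_listColouring_degIn_monoSub_le (hk : 0 < k) (hL : ∀ v, k ≤ #(L v))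
    (hsparse : ∀ s : Finset V, k * (D + 1) < #s →
      (D + 2) * G.degPairs s < 2 * (D + 1) * k * #s)
    (s : Finset V) : ∃ φ : V → ℕ, (∀ v, φ v ∈ L v) ∧ ∀ v ∈ s, (G.monoSub φ).degIn s v ≤ D := by
  induction s using Finset.strongInduction with
  | H s ih =>
    by_cases hs : #s ≤ k * (D + 1)
    · exact exists_listColouring_of_card_le hk hL hs
    · obtain ⟨A, hA⟩ := G.exists_isIsland (hsparse s (not_le.1 hs))
      obtain ⟨φ₀, hφ₀L, hφ₀⟩ := ih (s \ A) (sdiff_ssubset hA.1 hA.2.1)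
      exact exists_listColouring_of_isIsland hL hA hφ₀L hφ₀

theorem defectLe_iff [Fintype V] {φ : V → ℕ} {D : ℕ} :
    G.DefectLe φ D ↔ ∀ v, (G.monoSub φ).degIn univ v ≤ D := by
  refine forall_congr' fun v => ?_
  have : {w | G.Adj v w ∧ φ w = φ v} = ↑({w ∈ univ | (G.monoSub φ).Adj v w} : Finset V) := by
    ext w
    rw [mem_coe, mem_filter]
    simp [monoSub, eq_comm]
  rw [this, Set.ncard_coe_finset, degIn]

end SimpleGraph

theorem le_mul_toNat_ceil {k n n₀ : ℕ} (hk : 0 < k) (h : n < n₀) :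
    n ≤ k * (⌈((n₀ : ℚ) - 1) / k⌉).toNat := by
  have hceil : ((n₀ : ℚ) - 1) / k ≤ ⌈((n₀ : ℚ) - 1) / k⌉ := Int.le_ceil _
  rw [div_le_iff₀ (by exact_mod_cast hk)] at hceil
  have hn : (n : ℚ) ≤ n₀ - 1 := by
    rw [le_sub_iff_add_le]
    exact_mod_cast h
  have : (n : ℤ) ≤ ⌈((n₀ : ℚ) - 1) / k⌉ * k := by exact_mod_cast hn.trans hceil
  zify
  nlinarith [Int.self_le_toNat ⌈((n₀ : ℚ) - 1) / k⌉]

theorem add_two_mul_lt_of_lt_div_mul {d D k n x : ℕ} (hdD : d ≤ D)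
    (h : (x : ℚ) < (2 * d + 2) / (d + 2) * k * n) : (D + 2) * x < 2 * (D + 1) * k * n := by
  have hmono : (2 * d + 2 : ℚ) / (d + 2) ≤ (2 * D + 2) / (D + 2) := by
    rw [div_le_div_iff₀ (by positivity) (by positivity)]
    nlinarith [(by exact_mod_cast hdD : (d : ℚ) ≤ D)]
  have : (x : ℚ) < (2 * D + 2) / (D + 2) * (k * n) := by
    nlinarith [(by positivity : (0 : ℚ) ≤ k * n)]
  rw [div_mul_eq_mul_div, lt_div_iff₀ (by positivity)] at this
  exact_mod_cast (by linarith : ((D + 2) * x : ℚ) < 2 * (D + 1) * k * n)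

theorem stmt4_general {V : Type*} [Fintype V] (G : SimpleGraph V) (k d n₀ : ℕ)
    (hk : 1 ≤ k)
    (hmad : ∀ s : Finset V, n₀ ≤ s.card →
      (G.degPairs s : ℚ) < (2 * d + 2) / (d + 2) * k * s.card)
    (L : V → Finset ℕ) (hL : ∀ v, k ≤ (L v).card) :
    ∃ φ : V → ℕ, (∀ v, φ v ∈ L v) ∧
      G.DefectLe φ (max ((⌈((n₀ : ℚ) - 1) / k⌉).toNat - 1) d) := by
  set D := max ((⌈((n₀ : ℚ) - 1) / k⌉).toNat - 1) d
  have hsparse (s : Finset V) (hs : k * (D + 1) < #s) :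
      (D + 2) * G.degPairs s < 2 * (D + 1) * k * #s := by
    have hn₀ : n₀ ≤ #s := by
      by_contra! h
      have hceil : (⌈((n₀ : ℚ) - 1) / k⌉).toNat ≤ D + 1 := by omega
      exact hs.not_ge ((le_mul_toNat_ceil hk h).trans (Nat.mul_le_mul_left k hceil))
    exact add_two_mul_lt_of_lt_div_mul (le_max_right _ _) (hmad s hn₀)
  obtain ⟨φ, hφL, hφ⟩ := G.exists_listColouring_degIn_monoSub_le hk hL hsparse univ
  exact ⟨φ, hφL, G.defectLe_iff.2 fun v => hφ v (mem_univ v)⟩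

theorem stmt4 {V : Type*} [Fintype V] (G : SimpleGraph V) (k d n₀ : ℕ)
    (hk : 1 ≤ k) (hn : 1 ≤ n₀)
    (hmad : ∀ s : Finset V, n₀ ≤ s.card →
      (G.degPairs s : ℚ) < (2 * d + 2) / (d + 2) * k * s.card)
    (L : V → Finset ℕ) (hL : ∀ v, k ≤ (L v).card) :
    ∃ φ : V → ℕ, (∀ v, φ v ∈ L v) ∧
      G.DefectLe φ (max ((⌈((n₀ : ℚ) - 1) / k⌉).toNat - 1) d) :=
  stmt4_general G k d n₀ hk hmad L hL
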